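/- arXiv:2403.11819 — 2 statements merged into one kernel-verified Lean document; each statement's English description precedes it below -/
import Mathlib

section
/- Let A_t = det(DT_t) (DT_t)^{-1} (DT_t)^{-⊤} where DT_t = I + t DV. Then lim_{t→0} (A_t - I)/t = (div V) I - DV - (DV)^⊤. -/
/-!
At `t = 0` the matrix `A_t = det(1 + tM) (1 + tM)⁻¹ (1 + tMᵀ)⁻¹` equals `1`, so the difference
quotient is the slope of `t ↦ A_t` at `0`. By the product rule its derivative is
`tr M · 1 - M - Mᵀ`, since `det(1 + tM) = 1 + t tr M + O(t²)` and inversion has derivative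
`-M` along `1 + tM`.
-/

open Matrix Filter Topology

/-- Jacobian matrix of `V` at `x`: `(DV)_{i j} = ∂_j V_i`. -/
noncomputable def jacobianMatrix (d : ℕ) (V : (Fin d → ℝ) → (Fin d → ℝ)) (x : Fin d → ℝ) :
    Matrix (Fin d) (Fin d) ℝ :=
  Matrix.of fun i j => fderiv ℝ (fun y => V y i) x (Pi.single j 1)

theorem hasDerivAt_ringInverse_one_add_smul {𝕜 R : Type*} [NontriviallyNormedField 𝕜]
    [NormedRing R] [HasSummableGeomSeries R] [NormedAlgebra 𝕜 R] (a : R) :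
    HasDerivAt (fun t : 𝕜 => Ring.inverse (1 + t • a)) (-a) 0 := by
  have hline : HasDerivAt (fun t : 𝕜 => 1 + t • a) a 0 :=
    ((hasDerivAt_id 0).smul_const a).const_add 1 |>.congr_deriv (one_smul 𝕜 a)
  have hinv := hasFDerivAt_ringInverse (𝕜 := 𝕜) (1 : Rˣ)
  exact (hinv.comp_hasDerivAt_of_eq 0 hline (by simp)).congr_deriv (by simp)

-- Any matrix norm would do: all of them induce the product topology used in the statement.
attribute [local instance] Matrix.linftyOpNormedAddCommGroup Matrix.linftyOpNormedRing
  Matrix.linftyOpNormedAlgebra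

namespace Matrix

variable {n : Type*} [Fintype n] [DecidableEq n]

open Polynomial in
theorem hasDerivAt_det_one_add_smul {𝕜 : Type*} [NontriviallyNormedField 𝕜] (M : Matrix n n 𝕜) :
    HasDerivAt (fun t : 𝕜 => det (1 + t • M)) (trace M) 0 := by
  have hpoly : (fun t : 𝕜 => det (1 + t • M)) =
      fun t => (det (1 + (X : 𝕜[X]) • M.map C)).eval t := by
    funext t
    simp [eval_det, ← smul_eq_mul_diagonal]
  rw [hpoly, ← derivative_det_one_add_X_smul M]
  exact Polynomial.hasDerivAt _ 0

variable {𝕜 : Type*} [RCLike 𝕜]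

theorem hasDerivAt_inv_one_add_smul (M : Matrix n n 𝕜) :
    HasDerivAt (fun t : 𝕜 => (1 + t • M)⁻¹) (-M) 0 := by
  have h := hasDerivAt_ringInverse_one_add_smul (𝕜 := 𝕜) M
  simp only [← nonsing_inv_eq_ringInverse] at h
  exact h

theorem hasDerivAt_det_smul_inv_mul_inv_transpose (M : Matrix n n 𝕜) :
    HasDerivAt (fun t : 𝕜 => det (1 + t • M) • ((1 + t • M)⁻¹ * (1 + t • M)⁻¹ᵀ))
      (trace M • 1 - M - Mᵀ) 0 := by
  have hinv_transpose : ∀ t : 𝕜, (1 + t • M)⁻¹ᵀ = (1 + t • Mᵀ)⁻¹ := fun t => by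
    rw [transpose_nonsing_inv, transpose_add, transpose_one, transpose_smul]
  simp_rw [hinv_transpose]
  have h := (hasDerivAt_det_one_add_smul M).smul
    ((hasDerivAt_inv_one_add_smul M).mul (hasDerivAt_inv_one_add_smul Mᵀ))
  simp only [Pi.mul_apply, zero_smul, add_zero, inv_one, one_mul, mul_one, det_one,
    one_smul] at h
  refine h.congr_deriv ?_
  abel

end Matrix

theorem stmt2_general (d : ℕ)
    (V : (Fin d → ℝ) → (Fin d → ℝ))
    (x : Fin d → ℝ) :
    Tendsto
      (fun t : ℝ =>
        t⁻¹ •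
          ((((1 : Matrix (Fin d) (Fin d) ℝ) + t • jacobianMatrix d V x).det •
              ((((1 : Matrix (Fin d) (Fin d) ℝ) + t • jacobianMatrix d V x)⁻¹) *
                ((((1 : Matrix (Fin d) (Fin d) ℝ) + t • jacobianMatrix d V x)⁻¹)ᵀ))) - 1))
      (𝓝[≠] 0)
      (𝓝 ((jacobianMatrix d V x).trace • (1 : Matrix (Fin d) (Fin d) ℝ)
            - jacobianMatrix d V x - (jacobianMatrix d V x)ᵀ)) := by
  have h := hasDerivAt_iff_tendsto_slope.mp
    (hasDerivAt_det_smul_inv_mul_inv_transpose (jacobianMatrix d V x))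
  refine h.congr fun t => ?_
  simp [slope]

/-- With `DT_t = I + t DV` and `A_t = det(DT_t) (DT_t)^{-1} (DT_t)^{-⊤}`, one has
`lim_{t→0} (A_t − I)/t = (div V) I − DV − (DV)^⊤`, pointwise at every `x ∈ D`. -/
theorem stmt2 (d : ℕ) (D : Set (Fin d → ℝ)) (hD : IsOpen D) (hDb : Bornology.IsBounded D)
    (V : (Fin d → ℝ) → (Fin d → ℝ)) (hV : ContDiffOn ℝ 1 V D)
    (x : Fin d → ℝ) (hx : x ∈ D) :
    Tendsto
      (fun t : ℝ =>
        t⁻¹ •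
          ((((1 : Matrix (Fin d) (Fin d) ℝ) + t • jacobianMatrix d V x).det •
              ((((1 : Matrix (Fin d) (Fin d) ℝ) + t • jacobianMatrix d V x)⁻¹) *
                ((((1 : Matrix (Fin d) (Fin d) ℝ) + t • jacobianMatrix d V x)⁻¹)ᵀ))) - 1))
      (𝓝[≠] 0)
      (𝓝 ((jacobianMatrix d V x).trace • (1 : Matrix (Fin d) (Fin d) ℝ)
            - jacobianMatrix d V x - (jacobianMatrix d V x)ᵀ)) :=
  stmt2_general d V x
end

section
/- The map t ↦ φ ∘ T_t from [0,ε] to H^1(Ω)^d is differentiable at t = 0 with derivative Dφ V, i.e. lim_{t→0} (1/t)(φ ∘ T_t − φ) = Dφ V in L^2, for φ ∈ H^2(D)^d. -/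
/-!
Outside `tsupport V` both the difference quotient and `Dφ V` vanish. On it, `Dφ` is Lipschitz on
the compact `M`-thickening of `tsupport V` (`M = sup ‖V‖`), which contains every segment
`[x, x + t V x]` with `|t| ≤ 1`; the second-order Taylor estimate then bounds the difference
quotient minus `Dφ V` uniformly by `C |t|`. Uniform `O(t)` convergence of functions supported in a
fixed compact set implies convergence in `L²`.
-/

open Filter MeasureTheory Topology Metric
open scoped NNReal ENNReal

section Taylor

variable {E F : Type*} [NormedAddCommGroup E] [NormedSpace ℝ E]
  [NormedAddCommGroup F] [NormedSpace ℝ F]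

theorem norm_image_sub_sub_fderiv_le_of_lipschitzOnWith {f : E → F} {x y : E} {L : ℝ≥0}
    (hf : ∀ z ∈ segment ℝ x y, DifferentiableAt ℝ f z)
    (hL : LipschitzOnWith L (fderiv ℝ f) (segment ℝ x y)) :
    ‖f y - f x - fderiv ℝ f x (y - x)‖ ≤ L * ‖y - x‖ ^ 2 := by
  have hderiv : ∀ z ∈ segment ℝ x y, ‖fderiv ℝ f z - fderiv ℝ f x‖ ≤ L * ‖y - x‖ := by
    intro z hz
    have hzx : dist z x ≤ dist y x := by
      simpa [dist_comm x] using segment_subset_closedBall_left x y hz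
    calc ‖fderiv ℝ f z - fderiv ℝ f x‖
        ≤ L * dist z x := by
          rw [← dist_eq_norm]
          exact hL.dist_le_mul z hz x (left_mem_segment ℝ x y)
      _ ≤ L * ‖y - x‖ := by
          rw [← dist_eq_norm]
          gcongr
  calc ‖f y - f x - fderiv ℝ f x (y - x)‖ ≤ L * ‖y - x‖ * ‖y - x‖ :=
        (convex_segment x y).norm_image_sub_le_of_norm_fderiv_le' hf hderiv
          (left_mem_segment ℝ x y) (right_mem_segment ℝ x y)
    _ = L * ‖y - x‖ ^ 2 := by ring

theorem norm_smul_inv_sub_sub_fderiv_le_of_lipschitzOnWith {f : E → F} {x v : E} {t : ℝ}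
    {L : ℝ≥0} (ht : t ≠ 0) (hf : ∀ z ∈ segment ℝ x (x + t • v), DifferentiableAt ℝ f z)
    (hL : LipschitzOnWith L (fderiv ℝ f) (segment ℝ x (x + t • v))) :
    ‖t⁻¹ • (f (x + t • v) - f x) - fderiv ℝ f x v‖ ≤ L * ‖v‖ ^ 2 * |t| := by
  have htaylor := norm_image_sub_sub_fderiv_le_of_lipschitzOnWith hf hL
  rw [add_sub_cancel_left, map_smul, norm_smul, Real.norm_eq_abs] at htaylor
  have hquot : t⁻¹ • (f (x + t • v) - f x) - fderiv ℝ f x v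
      = t⁻¹ • (f (x + t • v) - f x - t • fderiv ℝ f x v) := by
    rw [smul_sub t⁻¹ _ (t • _), smul_smul, inv_mul_cancel₀ ht, one_smul]
  have ht' : 0 < |t| := abs_pos.mpr ht
  rw [hquot, norm_smul, norm_inv, Real.norm_eq_abs, inv_mul_le_iff₀ ht']
  calc ‖f (x + t • v) - f x - t • fderiv ℝ f x v‖ ≤ L * (|t| * ‖v‖) ^ 2 := htaylor
    _ = |t| * (L * ‖v‖ ^ 2 * |t|) := by ring

end Taylor

section DifferenceQuotient

variable {E F : Type*} [NormedAddCommGroup E] [NormedSpace ℝ E] [ProperSpace E]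
  [NormedAddCommGroup F] [NormedSpace ℝ F]

theorem exists_norm_smul_inv_sub_sub_fderiv_le {φ : E → F} (hφ : ContDiff ℝ 2 φ) {V : E → E}
    (hV : Continuous V) (hVc : HasCompactSupport V) :
    ∃ C, ∀ t : ℝ, t ≠ 0 → |t| ≤ 1 → ∀ x,
      ‖t⁻¹ • (φ (x + t • V x) - φ x) - fderiv ℝ φ x (V x)‖ ≤ C * |t| := by
  obtain ⟨M, hM⟩ := hV.bounded_above_of_compact_support hVc
  set K := cthickening M (tsupport V)
  obtain ⟨L, hL⟩ : ∃ L, LipschitzOnWith L (fderiv ℝ φ) K :=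
    (hφ.fderiv_right (m := 1) (by norm_num)).locallyLipschitz.locallyLipschitzOn
      |>.exists_lipschitzOnWith_of_compact hVc.isCompact.cthickening
  have hφd : Differentiable ℝ φ := hφ.differentiable (by norm_num)
  refine ⟨L * M ^ 2, fun t ht ht1 x => ?_⟩
  by_cases hx : x ∈ tsupport V
  · have hseg : segment ℝ x (x + t • V x) ⊆ K := by
      intro y hy
      refine mem_cthickening_of_dist_le y x M _ hx ?_
      calc dist y x ≤ dist (x + t • V x) x := by
            simpa [dist_comm x] using segment_subset_closedBall_left _ _ hy
        _ = |t| * ‖V x‖ := by rw [dist_eq_norm, add_sub_cancel_left, norm_smul, Real.norm_eq_abs]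
        _ ≤ 1 * M := by gcongr; exact hM x
        _ = M := one_mul M
    calc _ ≤ L * ‖V x‖ ^ 2 * |t| :=
          norm_smul_inv_sub_sub_fderiv_le_of_lipschitzOnWith ht (fun z _ => hφd z) (hL.mono hseg)
      _ ≤ L * M ^ 2 * |t| := by gcongr; exact hM x
  · simp only [image_eq_zero_of_notMem_tsupport hx, smul_zero, add_zero, sub_self, map_zero,
      norm_zero]
    exact mul_nonneg (mul_nonneg L.2 (sq_nonneg M)) (abs_nonneg t)

end DifferenceQuotient

theorem tendsto_eLpNorm_zero_of_norm_le {α ι F : Type*} [MeasurableSpace α] [NormedAddCommGroup F]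
    {μ : Measure α} [IsFiniteMeasure μ] {p : ℝ≥0∞} {l : Filter ι} {g : ι → α → F} {c : ι → ℝ}
    (hc : Tendsto c l (𝓝 0)) (hg : ∀ᶠ i in l, ∀ᵐ x ∂μ, ‖g i x‖ ≤ c i) :
    Tendsto (fun i => eLpNorm (g i) p μ) l (𝓝 0) := by
  have hbound : Tendsto (fun i => μ Set.univ ^ p.toReal⁻¹ * ENNReal.ofReal (c i)) l (𝓝 0) := by
    simpa using ENNReal.Tendsto.const_mul (ENNReal.tendsto_ofReal hc)
      (Or.inr (ENNReal.rpow_ne_top_of_nonneg (by positivity) (measure_ne_top μ _)))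
  exact tendsto_of_tendsto_of_tendsto_of_le_of_le' tendsto_const_nhds hbound
    (Eventually.of_forall fun _ => zero_le) (hg.mono fun _ => eLpNorm_le_of_ae_bound)

theorem stmt6_general (d : ℕ) (D : Set (Fin d → ℝ))
    (φ : (Fin d → ℝ) → (Fin d → ℝ))
    (hφ : ContDiff ℝ 2 φ)
    (V : (Fin d → ℝ) → (Fin d → ℝ))
    (hV : ContDiff ℝ 2 V) (hVsupp : HasCompactSupport V) :
    Tendsto
      (fun t : ℝ =>
        eLpNorm (fun x => t⁻¹ • (φ (x + t • V x) - φ x) - fderiv ℝ φ x (V x)) 2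
          (volume.restrict D))
      (𝓝[≠] 0) (𝓝 0) := by
  obtain ⟨C, hC⟩ := exists_norm_smul_inv_sub_sub_fderiv_le hφ hV.continuous hVsupp
  set q := fun (t : ℝ) x => t⁻¹ • (φ (x + t • V x) - φ x) - fderiv ℝ φ x (V x)
  have hq_supp : ∀ t, Function.support (q t) ⊆ tsupport V := fun t x hx => by
    by_contra hxV
    simp [q, image_eq_zero_of_notMem_tsupport hxV] at hx
  have : IsFiniteMeasure (volume.restrict (tsupport V)) :=
    isFiniteMeasure_restrict.mpr hVsupp.isCompact.measure_lt_top.ne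
  have hsmall : ∀ᶠ t : ℝ in 𝓝[≠] 0, t ≠ 0 ∧ |t| ≤ 1 :=
    eventually_mem_nhdsWithin.and <| eventually_nhdsWithin_of_eventually_nhds <|
      (continuous_abs.tendsto' (0 : ℝ) 0 abs_zero).eventually (eventually_le_nhds one_pos)
  have hrate : Tendsto (fun t : ℝ => C * |t|) (𝓝[≠] 0) (𝓝 0) := by
    simpa using (tendsto_const_nhds.mul (continuous_abs.tendsto' (0 : ℝ) 0 abs_zero)).mono_left
      nhdsWithin_le_nhds
  refine tendsto_of_tendsto_of_tendsto_of_le_of_le tendsto_const_nhds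
    (tendsto_eLpNorm_zero_of_norm_le (μ := volume.restrict (tsupport V)) (p := 2) hrate
      (hsmall.mono fun t ht => ae_of_all _ (hC t ht.1 ht.2)))
    (fun _ => zero_le) (fun t => ?_)
  exact (eLpNorm_mono_measure _ Measure.restrict_le_self).trans
    (eLpNorm_restrict_eq_of_support_subset (hq_supp t)).ge

/-- The map `t ↦ φ ∘ T_t` is differentiable at `t = 0` with derivative `Dφ V`:
`lim_{t→0} (1/t)(φ ∘ T_t − φ) = Dφ V` in `L²(D)^d`, for `φ ∈ H²(D)^d` (here `C²` with
square-integrable derivatives) and `T_t = id + tV`. -/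
theorem stmt6 (d : ℕ) (D : Set (Fin d → ℝ)) (hD : IsOpen D)
    (hDb : Bornology.IsBounded D) (hDm : MeasurableSet D)
    (φ : (Fin d → ℝ) → (Fin d → ℝ))
    (hφ : ContDiff ℝ 2 φ)
    (hφ0 : MemLp φ 2 (volume.restrict D))
    (hφ1 : MemLp (fderiv ℝ φ) 2 (volume.restrict D))
    (hφ2 : MemLp (fderiv ℝ (fderiv ℝ φ)) 2 (volume.restrict D))
    (V : (Fin d → ℝ) → (Fin d → ℝ))
    (hV : ContDiff ℝ 2 V) (hVsupp : HasCompactSupport V) (hVD : tsupport V ⊆ D) :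
    Tendsto
      (fun t : ℝ =>
        eLpNorm (fun x => t⁻¹ • (φ (x + t • V x) - φ x) - fderiv ℝ φ x (V x)) 2
          (volume.restrict D))
      (𝓝[≠] 0) (𝓝 0) :=
  stmt6_general d D φ hφ V hV hVsupp
end
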